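/- The degree-2 component of the apolarity annihilator of the nodal cubic y_1^3 + y_1^2 y_3 + y_2^2 y_3 in C[x_1,x_2,x_3] is spanned by x_1² − x_2² − 3x_1x_3, x_1x_2, x_3², and these three quadrics have no common zero in C^3 other than the origin. -/

import Mathlib

/-!
A quadric `h = ∑ c_{ij} x_i x_j` acts on the cubic `F` by `h ⋄ F = ∑ c_{ij} ∂_i ∂_j F`, a linear
form. Reading off its three coefficients gives three independent linear conditions on the
quadrics, cutting the six-dimensional space of quadrics down to the span of the three given ones.
For the common zeros: `x₃² = 0` forces `x₃ = 0`, and then `x₁⁴` and `x₂⁴` are combinations of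
`x₁² − x₂²` and `x₁x₂`. (Variables `x₁, x₂, x₃` are `X 0, X 1, X 2` in the code.)
-/

open MvPolynomial

noncomputable section

lemma pd_comm {n : ℕ} (i j : Fin n) (p : MvPolynomial (Fin n) ℂ) :
    pderiv i (pderiv j p) = pderiv j (pderiv i p) := by
  classical
  induction p using MvPolynomial.induction_on' with
  | monomial s a =>
    rcases eq_or_ne i j with rfl | hij
    · rfl
    · have e1 : (s - Finsupp.single j 1 : Fin n →₀ ℕ) i = s i := by
        simp [Finsupp.sub_apply, Finsupp.single_apply, (Ne.symm hij)]
      have e2 : (s - Finsupp.single i 1 : Fin n →₀ ℕ) j = s j := by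
        simp [Finsupp.sub_apply, Finsupp.single_apply, hij]
      rw [pderiv_monomial, pderiv_monomial, pderiv_monomial, pderiv_monomial, e1, e2,
        tsub_right_comm]
      ring_nf
  | add p q hp hq => simp [map_add, hp, hq]

lemma pdE_comm {n : ℕ} (i j : Fin n) :
    Commute ((pderiv i : Derivation ℂ (MvPolynomial (Fin n) ℂ) _).toLinearMap)
      ((pderiv j : Derivation ℂ (MvPolynomial (Fin n) ℂ) _).toLinearMap) := by
  apply LinearMap.ext
  intro p
  exact pd_comm i j p

/-- The differential operator `∂^m` on polynomials. -/
def dOp {n : ℕ} (m : Fin n →₀ ℕ) : Module.End ℂ (MvPolynomial (Fin n) ℂ) :=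
  Finset.univ.noncommProd
    (fun i => ((pderiv i : Derivation ℂ (MvPolynomial (Fin n) ℂ) _).toLinearMap) ^ (m i))
    (fun i _ j _ _ => (pdE_comm i j).pow_pow _ _)

lemma dOp_add {n : ℕ} (a b : Fin n →₀ ℕ) : dOp (a + b) = dOp a * dOp b := by
  classical
  unfold dOp
  refine Eq.trans ?_ (Finset.noncommProd_mul_distrib _ _ ?_ ?_ ?_)
  · apply Finset.noncommProd_congr rfl
    intro i _
    simp [Finsupp.add_apply, pow_add]
  all_goals exact fun i _ j _ _ => (pdE_comm i j).pow_pow _ _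

/-- The apolarity action of `ℂ[x_1,…,x_n]` on `ℂ[y_1,…,y_n]` (both realized as
`MvPolynomial (Fin n) ℂ`), as an algebra homomorphism into endomorphisms. -/
def diamondHom {n : ℕ} :
    MvPolynomial (Fin n) ℂ →ₐ[ℂ] Module.End ℂ (MvPolynomial (Fin n) ℂ) :=
  AddMonoidAlgebra.lift ℂ _ (Fin n →₀ ℕ)
    { toFun := fun m => dOp (Multiplicative.toAdd m)
      map_one' := by
        simp only [toAdd_one, dOp]
        apply Finset.noncommProd_eq_pow_card (m := 1) _ _ _ _ |>.trans (one_pow _)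
        intro i _
        simp
      map_mul' := fun a b => by
        simpa using dOp_add (Multiplicative.toAdd a) (Multiplicative.toAdd b) }

/-- `h ⋄ F` : the result of applying the differential operator `h(∂/∂y₁,…,∂/∂yₙ)` to `F`. -/
def diamond {n : ℕ} (h F : MvPolynomial (Fin n) ℂ) : MvPolynomial (Fin n) ℂ :=
  diamondHom h F

/-- The apolarity annihilator ideal `F^⊥ = {h : h ⋄ F = 0}`. -/
def perpIdeal {n : ℕ} (F : MvPolynomial (Fin n) ℂ) : Ideal (MvPolynomial (Fin n) ℂ) where
  carrier := {h | diamond h F = 0}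
  zero_mem' := by simp [diamond]
  add_mem' := by
    intro a b ha hb
    simp only [Set.mem_setOf_eq, diamond, map_add, LinearMap.add_apply] at *
    rw [ha, hb, add_zero]
  smul_mem' := by
    intro c x hx
    simp only [Set.mem_setOf_eq, diamond, smul_eq_mul, map_mul, Module.End.mul_apply] at *
    rw [hx, map_zero]

lemma dOp_single {n : ℕ} (i : Fin n) (k : ℕ) :
    dOp (Finsupp.single i k) =
      ((pderiv i : Derivation ℂ (MvPolynomial (Fin n) ℂ) _).toLinearMap) ^ k := by
  classical
  unfold dOp
  erw [← Finset.noncommProd_erase_mul _ (Finset.mem_univ i),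
    Finset.noncommProd_eq_pow_card _ _ _ 1]
  · simp
  · intro j hj
    simp [(Finset.mem_erase.mp hj).1.symm]

lemma diamondHom_X {n : ℕ} (i : Fin n) :
    diamondHom (X i) = (pderiv i : Derivation ℂ (MvPolynomial (Fin n) ℂ) _).toLinearMap := by
  rw [diamondHom, X, monomial]
  erw [AddMonoidAlgebra.lift_single]
  simp [dOp_single]

lemma homogeneousSubmodule_two_eq_span {σ R : Type*} [CommSemiring R] :
    homogeneousSubmodule σ R 2 = Submodule.span R (Set.range fun p : σ × σ => X p.1 * X p.2) := by
  rw [← homogeneousSubmodule_one_pow, pow_two, homogeneousSubmodule_one_eq_span_X,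
    Submodule.span_mul_span]
  congr 1
  ext; simp [Set.mem_mul]

@[simp]
lemma _root_.Derivation.map_ofNat {R A M : Type*} [CommSemiring R] [CommSemiring A]
    [AddCommMonoid M] [Algebra R A] [Module A M] [Module R M] [IsScalarTower R A M]
    (D : Derivation R A M) (k : ℕ) [k.AtLeastTwo] : D (no_index (OfNat.ofNat k : A)) = 0 :=
  D.map_natCast k

lemma diamond_X_mul_X {n : ℕ} (i j : Fin n) (F : MvPolynomial (Fin n) ℂ) :
    diamond (X i * X j) F = pderiv i (pderiv j F) := by
  simp [diamond, diamondHom_X]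

lemma diamond_sum_smul {n : ℕ} {ι : Type*} (s : Finset ι) (c : ι → ℂ)
    (q : ι → MvPolynomial (Fin n) ℂ) (F : MvPolynomial (Fin n) ℂ) :
    diamond (∑ i ∈ s, c i • q i) F = ∑ i ∈ s, c i • diamond (q i) F := by
  simp [diamond]

def nodalCubic : MvPolynomial (Fin 3) ℂ := X 0 ^ 3 + X 0 ^ 2 * X 2 + X 1 ^ 2 * X 2

lemma pderiv_pderiv_nodalCubic :
    pderiv 0 (pderiv 0 nodalCubic) = 6 * X 0 + 2 * X 2 ∧
    pderiv 1 (pderiv 1 nodalCubic) = 2 * X 2 ∧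
    pderiv 2 (pderiv 2 nodalCubic) = 0 ∧
    pderiv 0 (pderiv 1 nodalCubic) = 0 ∧
    pderiv 0 (pderiv 2 nodalCubic) = 2 * X 0 ∧
    pderiv 1 (pderiv 2 nodalCubic) = 2 * X 1 := by
  refine ⟨?_, ?_, ?_, ?_, ?_, ?_⟩ <;> simp [nodalCubic, pderiv_X] <;> ring

lemma diamond_quadric_nodalCubic (c : Fin 3 × Fin 3 → ℂ) :
    diamond (∑ p, c p • (X p.1 * X p.2)) nodalCubic =
      (6 * c (0, 0) + 2 * (c (0, 2) + c (2, 0))) • X 0 + (2 * (c (1, 2) + c (2, 1))) • X 1 +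
        (2 * (c (0, 0) + c (1, 1))) • X 2 := by
  rw [diamond_sum_smul]
  simp only [diamond_X_mul_X, Fintype.sum_prod_type, Fin.sum_univ_three,
    pd_comm 1 0, pd_comm 2 0, pd_comm 2 1, pderiv_pderiv_nodalCubic]
  simp only [smul_eq_C_mul, map_add, map_mul, map_ofNat]
  ring

lemma coeff_relations_of_diamond_quadric_nodalCubic_eq_zero {c : Fin 3 × Fin 3 → ℂ}
    (h : diamond (∑ p, c p • (X p.1 * X p.2)) nodalCubic = 0) :
    c (1, 1) = -c (0, 0) ∧ c (2, 0) = -3 * c (0, 0) - c (0, 2) ∧ c (2, 1) = -c (1, 2) := by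
  rw [diamond_quadric_nodalCubic] at h
  have hcoeff := Fintype.linearIndependent_iff.mp (linearIndependent_X (Fin 3) ℂ)
    ![6 * c (0, 0) + 2 * (c (0, 2) + c (2, 0)), 2 * (c (1, 2) + c (2, 1)),
      2 * (c (0, 0) + c (1, 1))] (by simpa [Fin.sum_univ_three] using h)
  have h0 := hcoeff 0
  have h1 := hcoeff 1
  have h2 := hcoeff 2
  simp only [Matrix.cons_val] at h0 h1 h2
  exact ⟨by linear_combination h2 / 2, by linear_combination h0 / 2, by linear_combination h1 / 2⟩

lemma quadric_eq_of_coeff_relations {c : Fin 3 × Fin 3 → ℂ} (h11 : c (1, 1) = -c (0, 0))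
    (h20 : c (2, 0) = -3 * c (0, 0) - c (0, 2)) (h21 : c (2, 1) = -c (1, 2)) :
    ∑ p, c p • (X p.1 * X p.2 : MvPolynomial (Fin 3) ℂ) =
      c (0, 0) • (X 0 ^ 2 - X 1 ^ 2 - 3 * (X 0 * X 2)) + (c (0, 1) + c (1, 0)) • (X 0 * X 1) +
        c (2, 2) • X 2 ^ 2 := by
  simp only [Fintype.sum_prod_type, Fin.sum_univ_three, h11, h20, h21, smul_eq_C_mul, map_add,
    map_sub, map_neg, map_mul, map_ofNat]
  ring

lemma isHomogeneous_two_nodalCubic_quadrics :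
    ∀ g ∈ ({X 0 ^ 2 - X 1 ^ 2 - 3 * (X 0 * X 2), X 0 * X 1, X 2 ^ 2} :
      Set (MvPolynomial (Fin 3) ℂ)), g.IsHomogeneous 2 := by
  have hX (i j : Fin 3) : (X i * X j : MvPolynomial (Fin 3) ℂ).IsHomogeneous 2 :=
    (isHomogeneous_X ℂ i).mul (isHomogeneous_X ℂ j)
  rintro g (rfl | rfl | rfl)
  · refine ((isHomogeneous_X_pow 0 2).sub (isHomogeneous_X_pow 1 2)).sub ?_
    simpa only [map_ofNat] using (hX 0 2).C_mul (3 : ℂ)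
  · exact hX 0 1
  · exact isHomogeneous_X_pow 2 2

lemma diamond_nodalCubic_quadrics :
    ∀ g ∈ ({X 0 ^ 2 - X 1 ^ 2 - 3 * (X 0 * X 2), X 0 * X 1, X 2 ^ 2} :
      Set (MvPolynomial (Fin 3) ℂ)), diamond g nodalCubic = 0 := by
  rintro g (rfl | rfl | rfl)
  · simp [diamond, diamondHom_X, map_ofNat, Module.End.ofNat_apply, pow_two, nodalCubic, pderiv_X]
    ring
  all_goals simp [diamond, diamondHom_X, pow_two, nodalCubic, pderiv_X]

theorem homogeneousSubmodule_two_inf_perpIdeal_nodalCubic :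
    homogeneousSubmodule (Fin 3) ℂ 2 ⊓ (perpIdeal nodalCubic).restrictScalars ℂ =
      Submodule.span ℂ {X 0 ^ 2 - X 1 ^ 2 - 3 * (X 0 * X 2), X 0 * X 1, X 2 ^ 2} := by
  refine le_antisymm ?_ (Submodule.span_le.mpr fun g hg =>
    ⟨isHomogeneous_two_nodalCubic_quadrics g hg, diamond_nodalCubic_quadrics g hg⟩)
  intro h hh
  obtain ⟨hhom, hperp⟩ := Submodule.mem_inf.mp hh
  rw [homogeneousSubmodule_two_eq_span, Submodule.mem_span_range_iff_exists_fun] at hhom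
  obtain ⟨c, rfl⟩ := hhom
  obtain ⟨h11, h20, h21⟩ := coeff_relations_of_diamond_quadric_nodalCubic_eq_zero hperp
  rw [quadric_eq_of_coeff_relations h11 h20 h21]
  refine add_mem (add_mem ?_ ?_) ?_ <;>
    exact Submodule.smul_mem _ _ (Submodule.subset_span (by simp))

lemma eq_zero_of_eval_nodalCubic_quadrics_eq_zero (x : Fin 3 → ℂ)
    (h₁ : x 0 ^ 2 - x 1 ^ 2 - 3 * (x 0 * x 2) = 0) (h₂ : x 0 * x 1 = 0) (h₃ : x 2 ^ 2 = 0) :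
    x = 0 := by
  have hx₂ : x 2 = 0 := pow_eq_zero_iff two_ne_zero |>.mp h₃
  have hx₀ : x 0 ^ 4 = 0 := by
    linear_combination x 0 ^ 2 * h₁ + x 1 * x 0 * h₂ + 3 * x 0 ^ 3 * hx₂
  have hx₁ : x 1 ^ 4 = 0 := by
    linear_combination -(x 1 ^ 2) * h₁ + x 1 * x 0 * h₂ - 3 * x 0 * x 1 ^ 2 * hx₂
  ext i
  fin_cases i
  exacts [pow_eq_zero_iff four_ne_zero |>.mp hx₀, pow_eq_zero_iff four_ne_zero |>.mp hx₁, hx₂]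

/-- The degree-2 component of the apolarity annihilator of the nodal cubic
`y₁³ + y₁²y₃ + y₂²y₃` is spanned by `x₁² − x₂² − 3x₁x₃, x₁x₂, x₃²`, and these three quadrics
have no common zero in `ℂ³` other than the origin. -/
theorem nodal_cubic_perp_quadrics :
    (∀ h : MvPolynomial (Fin 3) ℂ,
      (h ∈ homogeneousSubmodule (Fin 3) ℂ 2 ∧
          diamond h (X 0 ^ 3 + X 0 ^ 2 * X 2 + X 1 ^ 2 * X 2) = 0) ↔
        h ∈ Submodule.span ℂ
          ({X 0 ^ 2 - X 1 ^ 2 - 3 * (X 0 * X 2), X 0 * X 1, X 2 ^ 2} :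
            Set (MvPolynomial (Fin 3) ℂ))) ∧
    ∀ x : Fin 3 → ℂ,
      MvPolynomial.eval x (X 0 ^ 2 - X 1 ^ 2 - 3 * (X 0 * X 2) : MvPolynomial (Fin 3) ℂ) = 0 →
      MvPolynomial.eval x (X 0 * X 1 : MvPolynomial (Fin 3) ℂ) = 0 →
      MvPolynomial.eval x (X 2 ^ 2 : MvPolynomial (Fin 3) ℂ) = 0 → x = 0 := by
  refine ⟨fun h => SetLike.ext_iff.mp homogeneousSubmodule_two_inf_perpIdeal_nodalCubic h,
    fun x h₁ h₂ h₃ => ?_⟩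
  simp only [eval_sub, eval_mul, eval_pow, eval_X, eval_ofNat] at h₁ h₂ h₃
  exact eq_zero_of_eval_nodalCubic_quadrics_eq_zero x h₁ h₂ h₃

end
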